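/- (Corollary 3 ii) In the compound multinomial model, if E[Y1_1^2], E[Y2_1^2], E[Y3_1^2], E[Y4_1^2] are all finite, then Var(S1) = t·[p1·E[Y1_1^2] + p0·E[Y3_1^2] − (p1·E[Y1_1] + p0·E[Y3_1])^2] and Var(S2) = t·[p2·E[Y2_1^2] + p0·E[Y4_1^2] − (p2·E[Y2_1] + p0·E[Y4_1])^2]. -/

import Mathlib

/-!
Conditionally on `(B0, B1) = (a, b)`, `S1` is a sum of `b` copies of `Y1` and `a` copies of
`Y3`, all independent, so its conditional mean is `b μ₁ + a μ₃` and its conditional second moment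
is `b σ₁² + a σ₃² + (b μ₁ + a μ₃)²`. The pair `(B0, B1)` is trinomial with parameters
`(t; p0, p1)`, and averaging over it only needs the first two moments of a linear form
`L = c a + d b` under the trinomial weights `w_t`: `E L = t (c p0 + d p1)` and
`E L² = t (t - 1) (c p0 + d p1)² + t (c² p0 + d² p1)`. Both follow from the shift identity
`(b + 1) w_{t+1}(a, b + 1) = (t + 1) p1 w_t(a, b)` and its analogue in `a`.
`S2` is `S1` for the model with `B1` and `B2` exchanged.
-/

open MeasureTheory ProbabilityTheory Finset

/-- `(B0, B1, B2)` has the multinomial distribution with parameters `t` and `(p0, p1, p2)`. -/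
def IsMultinomial {Ω : Type*} [MeasureSpace Ω] (t : ℕ) (p0 p1 p2 : ℝ)
    (B0 B1 B2 : Ω → ℕ) : Prop :=
  Measurable B0 ∧ Measurable B1 ∧ Measurable B2 ∧
  ∀ b0 b1 b2 : ℕ,
    (ℙ {ω | B0 ω = b0 ∧ B1 ω = b1 ∧ B2 ω = b2}).toReal =
      if b0 + b1 + b2 ≤ t then
        (Nat.factorial t : ℝ) /
          ((Nat.factorial b0 : ℝ) * (Nat.factorial b1 : ℝ) * (Nat.factorial b2 : ℝ) *
            (Nat.factorial (t - (b0 + b1 + b2)) : ℝ)) *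
          (p0 ^ b0 * p1 ^ b1 * p2 ^ b2 * (1 - (p0 + p1 + p2)) ^ (t - (b0 + b1 + b2)))
      else 0

def triangle (t : ℕ) : Finset (ℕ × ℕ) :=
  {p ∈ range (t + 1) ×ˢ range (t + 1) | p.1 + p.2 ≤ t}

@[simp]
lemma mem_triangle {t : ℕ} {p : ℕ × ℕ} : p ∈ triangle t ↔ p.1 + p.2 ≤ t := by
  simp only [triangle, mem_filter, mem_product, mem_range]
  omega

lemma sum_triangle {M : Type*} [AddCommMonoid M] (t : ℕ) (F : ℕ × ℕ → M) :
    ∑ p ∈ triangle t, F p = ∑ a ∈ range (t + 1), ∑ b ∈ range (t - a + 1), F (a, b) := by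
  rw [triangle, sum_filter, sum_product]
  refine sum_congr rfl fun a ha => ?_
  rw [← sum_filter]
  congr 1
  ext b
  simp only [mem_range] at ha
  simp only [mem_filter, mem_range]
  omega

noncomputable def trinomialWeight (t : ℕ) (x y : ℝ) (p : ℕ × ℕ) : ℝ :=
  (t.factorial : ℝ) / (p.1.factorial * p.2.factorial * (t - (p.1 + p.2)).factorial) *
    (x ^ p.1 * y ^ p.2 * (1 - (x + y)) ^ (t - (p.1 + p.2)))

lemma trinomialWeight_eq_choose_mul_choose {t a b : ℕ} (h : a + b ≤ t) (x y : ℝ) :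
    trinomialWeight t x y (a, b) =
      x ^ a * (y ^ b * (1 - (x + y)) ^ (t - a - b) * (t - a).choose b) * t.choose a := by
  rw [trinomialWeight, Nat.cast_choose ℝ (by omega : a ≤ t),
    Nat.cast_choose ℝ (by omega : b ≤ t - a), Nat.sub_sub t a b]
  field_simp

lemma sum_trinomialWeight (t : ℕ) (x y : ℝ) : ∑ p ∈ triangle t, trinomialWeight t x y p = 1 := by
  have inner : ∀ a ∈ range (t + 1), ∑ b ∈ range (t - a + 1), trinomialWeight t x y (a, b) =
      x ^ a * (1 - x) ^ (t - a) * t.choose a := by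
    intro a ha
    rw [sum_congr rfl fun b hb =>
        trinomialWeight_eq_choose_mul_choose (by simp at ha hb; omega) x y,
      ← sum_mul, ← mul_sum, show 1 - x = y + (1 - (x + y)) by ring, add_pow, mul_assoc]
  rw [sum_triangle, sum_congr rfl inner, ← add_pow, add_sub_cancel, one_pow]

section Shift

variable {t a b : ℕ} {x y : ℝ}

lemma succ_mul_trinomialWeight_snd (h : a + b ≤ t) :
    (b + 1 : ℝ) * trinomialWeight (t + 1) x y (a, b + 1) =
      (t + 1) * y * trinomialWeight t x y (a, b) := by
  simp only [trinomialWeight, show t + 1 - (a + (b + 1)) = t - (a + b) by omega,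
    Nat.factorial_succ]
  push_cast
  field_simp
  ring

lemma succ_mul_trinomialWeight_fst (h : a + b ≤ t) :
    (a + 1 : ℝ) * trinomialWeight (t + 1) x y (a + 1, b) =
      (t + 1) * x * trinomialWeight t x y (a, b) := by
  simp only [trinomialWeight, show t + 1 - (a + 1 + b) = t - (a + b) by omega,
    Nat.factorial_succ]
  push_cast
  field_simp
  ring

lemma sum_snd_mul_trinomialWeight (f : ℕ × ℕ → ℝ) :
    ∑ p ∈ triangle (t + 1), p.2 * f p * trinomialWeight (t + 1) x y p =
      (t + 1) * y * ∑ p ∈ triangle t, f (p.1, p.2 + 1) * trinomialWeight t x y p := by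
  rw [sum_triangle, sum_triangle, sum_range_succ, mul_sum]
  simp only [Nat.sub_self, zero_add, sum_range_one, CharP.cast_eq_zero, zero_mul, add_zero]
  refine sum_congr rfl fun a ha => ?_
  rw [show t + 1 - a + 1 = t - a + 1 + 1 by simp at ha; omega, sum_range_succ', mul_sum]
  simp only [CharP.cast_eq_zero, zero_mul, add_zero]
  refine sum_congr rfl fun b hb => ?_
  rw [mul_left_comm, ← succ_mul_trinomialWeight_snd (by simp at ha hb; omega)]
  push_cast
  ring

lemma sum_fst_mul_trinomialWeight (f : ℕ × ℕ → ℝ) :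
    ∑ p ∈ triangle (t + 1), p.1 * f p * trinomialWeight (t + 1) x y p =
      (t + 1) * x * ∑ p ∈ triangle t, f (p.1 + 1, p.2) * trinomialWeight t x y p := by
  rw [sum_triangle, sum_triangle, sum_range_succ', mul_sum]
  simp only [CharP.cast_eq_zero, zero_mul, sum_const_zero, add_zero, Nat.add_sub_add_right]
  refine sum_congr rfl fun a ha => ?_
  rw [mul_sum]
  refine sum_congr rfl fun b hb => ?_
  rw [mul_left_comm, ← succ_mul_trinomialWeight_fst (by simp at ha hb; omega)]
  push_cast
  ring

end Shift

lemma sum_linear_mul_trinomialWeight (t : ℕ) (x y a b : ℝ) :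
    ∑ p ∈ triangle t, (a * p.1 + b * p.2) * trinomialWeight t x y p = t * (a * x + b * y) := by
  cases t with
  | zero => simp [sum_triangle]
  | succ s =>
    calc ∑ p ∈ triangle (s + 1), (a * p.1 + b * p.2) * trinomialWeight (s + 1) x y p
        = ∑ p ∈ triangle (s + 1), p.1 * a * trinomialWeight (s + 1) x y p +
            ∑ p ∈ triangle (s + 1), p.2 * b * trinomialWeight (s + 1) x y p := by
          rw [← sum_add_distrib]
          exact sum_congr rfl fun p _ => by ring
      _ = (s + 1) * x * ∑ p ∈ triangle s, a * trinomialWeight s x y p +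
            (s + 1) * y * ∑ p ∈ triangle s, b * trinomialWeight s x y p := by
          rw [sum_fst_mul_trinomialWeight, sum_snd_mul_trinomialWeight]
      _ = ((s + 1 : ℕ) : ℝ) * (a * x + b * y) := by
          rw [← mul_sum, ← mul_sum, sum_trinomialWeight]
          push_cast
          ring

lemma sum_linear_sq_mul_trinomialWeight (t : ℕ) (x y a b : ℝ) :
    ∑ p ∈ triangle t, (a * p.1 + b * p.2) ^ 2 * trinomialWeight t x y p =
      t * (t - 1) * (a * x + b * y) ^ 2 + t * (a ^ 2 * x + b ^ 2 * y) := by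
  cases t with
  | zero => simp [sum_triangle]
  | succ s =>
    set L : ℕ × ℕ → ℝ := fun p => a * p.1 + b * p.2 with hL
    have shifted (c d : ℝ) : ∑ p ∈ triangle s, c * (L p + d) * trinomialWeight s x y p =
        c * (s * (a * x + b * y) + d) := by
      calc ∑ p ∈ triangle s, c * (L p + d) * trinomialWeight s x y p
          = c * (∑ p ∈ triangle s, L p * trinomialWeight s x y p +
              d * ∑ p ∈ triangle s, trinomialWeight s x y p) := by
            rw [mul_sum, ← sum_add_distrib, mul_sum]
            exact sum_congr rfl fun p _ => by ring
        _ = c * (s * (a * x + b * y) + d) := by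
          rw [sum_linear_mul_trinomialWeight, sum_trinomialWeight, mul_one]
    calc ∑ p ∈ triangle (s + 1), L p ^ 2 * trinomialWeight (s + 1) x y p
        = ∑ p ∈ triangle (s + 1), p.1 * (a * L p) * trinomialWeight (s + 1) x y p +
            ∑ p ∈ triangle (s + 1), p.2 * (b * L p) * trinomialWeight (s + 1) x y p := by
          rw [← sum_add_distrib]
          exact sum_congr rfl fun p _ => by ring
      _ = (s + 1) * x * ∑ p ∈ triangle s, a * (L p + a) * trinomialWeight s x y p +
            (s + 1) * y * ∑ p ∈ triangle s, b * (L p + b) * trinomialWeight s x y p := by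
          rw [sum_fst_mul_trinomialWeight, sum_snd_mul_trinomialWeight]
          congr 2 <;> refine sum_congr rfl fun p _ => ?_ <;> simp only [hL] <;> push_cast <;> ring
      _ = _ := by
          rw [shifted, shifted]
          push_cast
          ring

lemma sum_multinomial_eq_trinomialWeight (t a b : ℕ) (x y z : ℝ) :
    ∑ c ∈ range (t + 1), (if a + b + c ≤ t then
      (t.factorial : ℝ) / (a.factorial * b.factorial * c.factorial * (t - (a + b + c)).factorial) *
        (x ^ a * y ^ b * z ^ c * (1 - (x + y + z)) ^ (t - (a + b + c))) else 0) =
      if a + b ≤ t then trinomialWeight t x y (a, b) else 0 := by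
  split_ifs with hab
  · rw [← sum_filter, show {c ∈ range (t + 1) | a + b + c ≤ t} = range (t - (a + b) + 1) by
      ext c; simp only [mem_filter, mem_range]; omega]
    have hterm : ∀ c ∈ range (t - (a + b) + 1),
        (t.factorial : ℝ) /
            (a.factorial * b.factorial * c.factorial * (t - (a + b + c)).factorial) *
          (x ^ a * y ^ b * z ^ c * (1 - (x + y + z)) ^ (t - (a + b + c))) =
        (t.factorial : ℝ) / (a.factorial * b.factorial * (t - (a + b)).factorial) *
          (x ^ a * y ^ b) * (z ^ c * (1 - (x + y + z)) ^ (t - (a + b) - c) * (t - (a + b)).choose c) := by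
      intro c hc
      simp only [mem_range] at hc
      rw [Nat.cast_choose ℝ (by omega : c ≤ t - (a + b)), Nat.sub_sub]
      field_simp
    rw [sum_congr rfl hterm, ← mul_sum, ← add_pow, trinomialWeight]
    ring_nf
  · exact sum_eq_zero fun c _ => if_neg (by omega)

def IsTrinomial {Ω : Type*} [MeasureSpace Ω] (t : ℕ) (x y : ℝ) (N : Ω → ℕ × ℕ) : Prop :=
  Measurable N ∧
    ∀ p, (ℙ (N ⁻¹' {p})).toReal = if p.1 + p.2 ≤ t then trinomialWeight t x y p else 0

section Marginals

variable {Ω : Type*} [MeasureSpace Ω] {t : ℕ} {p0 p1 p2 : ℝ} {B0 B1 B2 : Ω → ℕ}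

lemma IsMultinomial.swap (h : IsMultinomial t p0 p1 p2 B0 B1 B2) :
    IsMultinomial t p0 p2 p1 B0 B2 B1 := by
  obtain ⟨h0, h1, h2, hpmf⟩ := h
  refine ⟨h0, h2, h1, fun a b c => ?_⟩
  rw [show {ω | B0 ω = a ∧ B2 ω = b ∧ B1 ω = c} = {ω | B0 ω = a ∧ B1 ω = c ∧ B2 ω = b} from
      Set.ext fun _ => and_congr_right' and_comm,
    hpmf, show a + c + b = a + b + c by ring]
  congr 1
  ring

lemma IsMultinomial.isTrinomial [IsFiniteMeasure (ℙ : Measure Ω)]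
    (h : IsMultinomial t p0 p1 p2 B0 B1 B2) : IsTrinomial t p0 p1 fun ω => (B0 ω, B1 ω) := by
  obtain ⟨h0, h1, h2, hpmf⟩ := h
  refine ⟨h0.prodMk h1, fun ⟨a, b⟩ => ?_⟩
  set F : ℕ → Set Ω := fun c => {ω | B0 ω = a ∧ B1 ω = b ∧ B2 ω = c}
  have hF (c : ℕ) : MeasurableSet (F c) :=
    (h0 (measurableSet_singleton a)).inter
      ((h1 (measurableSet_singleton b)).inter (h2 (measurableSet_singleton c)))
  have hdisj : Pairwise (Function.onFun Disjoint F) := fun c c' hcc' =>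
    Set.disjoint_left.2 fun ω hω hω' => hcc' (hω.2.2.symm.trans hω'.2.2)
  have hnull (c : ℕ) (hc : c ∉ range (t + 1)) : ℙ (F c) = 0 := by
    have hc0 := hpmf a b c
    rw [if_neg (by simp at hc; omega)] at hc0
    exact (ENNReal.toReal_eq_zero_iff _).1 hc0 |>.resolve_right (measure_ne_top _ _)
  have hunion : (fun ω => (B0 ω, B1 ω)) ⁻¹' {(a, b)} = ⋃ c, F c := by
    ext ω
    simp [F]
  rw [← sum_multinomial_eq_trinomialWeight, hunion, measure_iUnion hdisj hF,
    tsum_eq_sum hnull, ENNReal.toReal_sum fun c _ => measure_ne_top _ _]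
  exact sum_congr rfl fun c _ => hpmf a b c

end Marginals

lemma IsTrinomial.ae_mem_triangle {Ω : Type*} [MeasureSpace Ω] [IsFiniteMeasure (ℙ : Measure Ω)]
    {t : ℕ} {x y : ℝ} {N : Ω → ℕ × ℕ} (hN : IsTrinomial t x y N) : ∀ᵐ ω, N ω ∈ triangle t := by
  change ℙ (N ⁻¹' (triangle t : Set (ℕ × ℕ))ᶜ) = 0
  refine (measure_preimage_eq_zero_iff_of_countable (Set.to_countable _)).2 fun p hp => ?_
  have hp0 := hN.2 p
  rw [if_neg (by simpa using hp)] at hp0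
  exact (ENNReal.toReal_eq_zero_iff _).1 hp0 |>.resolve_right (measure_ne_top _ _)

section Conditioning

variable {Ω κ : Type*} {mΩ : MeasurableSpace Ω} {μ : Measure Ω} {N : Ω → κ} {s : Finset κ}
  {g : κ → Ω → ℝ}

lemma comp_ae_eq_sum_indicator (hs : ∀ᵐ ω ∂μ, N ω ∈ s) :
    (fun ω => g (N ω) ω) =ᵐ[μ] ∑ k ∈ s, (N ⁻¹' {k}).indicator (g k) := by
  filter_upwards [hs] with ω hω
  rw [Finset.sum_apply, sum_eq_single_of_mem (N ω) hω fun k _ hk => by simp [Ne.symm hk]]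
  simp

variable [MeasurableSpace κ] [MeasurableSingletonClass κ]

lemma memLp_comp_of_ae_mem (hN : Measurable N) (hs : ∀ᵐ ω ∂μ, N ω ∈ s) {q : ENNReal}
    (hg : ∀ k, MemLp (g k) q μ) : MemLp (fun ω => g (N ω) ω) q μ :=
  (memLp_finsetSum' s fun k _ => (hg k).indicator (hN (measurableSet_singleton k))).ae_eq
    (comp_ae_eq_sum_indicator hs).symm

lemma integral_comp_eq_sum_of_indepFun (hN : Measurable N) (hs : ∀ᵐ ω ∂μ, N ω ∈ s)
    (hg : ∀ k, Integrable (g k) μ) (hind : ∀ k, IndepFun N (g k) μ) :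
    ∫ ω, g (N ω) ω ∂μ = ∑ k ∈ s, μ.real (N ⁻¹' {k}) * ∫ ω, g k ω ∂μ := by
  have hfiber (k : κ) : MeasurableSet (N ⁻¹' {k}) := hN (measurableSet_singleton k)
  rw [integral_congr_ae (comp_ae_eq_sum_indicator hs), Finset.sum_fn,
    integral_finsetSum _ fun k _ => (hg k).indicator (hfiber k)]
  refine sum_congr rfl fun k _ => ?_
  rw [integral_indicator (hfiber k)]
  exact ((IndepFun_iff_Indep _ _ _).1 (hind k)).setIntegral_eq_mul (f := id) hN.comap_le
    (hg k).aemeasurable ⟨{k}, measurableSet_singleton k, rfl⟩ aestronglyMeasurable_id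

end Conditioning

section FixedCounts

variable {Ω : Type*} {mΩ : MeasurableSpace Ω} {μ : Measure Ω} {A C : ℕ → Ω → ℝ}
  (hAid : ∀ i, IdentDistrib (A i) (A 0) μ μ) (hCid : ∀ i, IdentDistrib (C i) (C 0) μ μ)
include hAid hCid

lemma memLp_sum_range_add_sum_range {q : ENNReal} (hA : MemLp (A 0) q μ) (hC : MemLp (C 0) q μ)
    (m n : ℕ) : MemLp (fun ω => ∑ i ∈ range m, A i ω + ∑ i ∈ range n, C i ω) q μ :=
  (memLp_finsetSum _ fun i _ => (hAid i).symm.memLp_snd hA).add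
    (memLp_finsetSum _ fun i _ => (hCid i).symm.memLp_snd hC)

lemma integral_sum_range_add_sum_range (hA : Integrable (A 0) μ) (hC : Integrable (C 0) μ)
    (m n : ℕ) :
    ∫ ω, (∑ i ∈ range m, A i ω + ∑ i ∈ range n, C i ω) ∂μ =
      m * (∫ ω, A 0 ω ∂μ) + n * ∫ ω, C 0 ω ∂μ := by
  have hAi (i : ℕ) : Integrable (A i) μ := (hAid i).integrable_iff.2 hA
  have hCi (i : ℕ) : Integrable (C i) μ := (hCid i).integrable_iff.2 hC
  rw [integral_add (integrable_finsetSum _ fun i _ => hAi i)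
      (integrable_finsetSum _ fun i _ => hCi i),
    integral_finsetSum _ fun i _ => hAi i, integral_finsetSum _ fun i _ => hCi i]
  simp [(hAid _).integral_eq, (hCid _).integral_eq]

lemma variance_sum_range_add_sum_range (hA : MemLp (A 0) 2 μ) (hC : MemLp (C 0) 2 μ)
    (hpair : Pairwise fun k l => IndepFun (Sum.elim A C k) (Sum.elim A C l) μ) (m n : ℕ) :
    variance (fun ω => ∑ i ∈ range m, A i ω + ∑ i ∈ range n, C i ω) μ =
      m * variance (A 0) μ + n * variance (C 0) μ := by
  have hD : ∀ k, MemLp (Sum.elim A C k) 2 μ := by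
    rintro (i | i)
    exacts [(hAid i).symm.memLp_snd hA, (hCid i).symm.memLp_snd hC]
  have hsum : (fun ω => ∑ i ∈ range m, A i ω + ∑ i ∈ range n, C i ω) =
      ∑ k ∈ (range m).disjSum (range n), Sum.elim A C k := by
    ext ω
    simp [sum_disjSum]
  rw [hsum, IndepFun.variance_sum (fun k _ => hD k) fun k _ l _ hkl => hpair hkl, sum_disjSum]
  simp [(hAid _).variance_eq, (hCid _).variance_eq]

lemma integral_sq_sum_range_add_sum_range [IsProbabilityMeasure μ] (hA : MemLp (A 0) 2 μ)
    (hC : MemLp (C 0) 2 μ)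
    (hpair : Pairwise fun k l => IndepFun (Sum.elim A C k) (Sum.elim A C l) μ) (m n : ℕ) :
    ∫ ω, (∑ i ∈ range m, A i ω + ∑ i ∈ range n, C i ω) ^ 2 ∂μ =
      m * variance (A 0) μ + n * variance (C 0) μ +
        (m * (∫ ω, A 0 ω ∂μ) + n * ∫ ω, C 0 ω ∂μ) ^ 2 := by
  rw [← variance_sum_range_add_sum_range hAid hCid hA hC hpair,
    ← integral_sum_range_add_sum_range hAid hCid (hA.integrable one_le_two)
      (hC.integrable one_le_two),
    variance_eq_sub (memLp_sum_range_add_sum_range hAid hCid hA hC m n)]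
  simp

end FixedCounts

lemma IsTrinomial.integral_comp_eq_sum {Ω : Type*} [MeasureSpace Ω]
    [IsFiniteMeasure (ℙ : Measure Ω)] {t : ℕ} {x y : ℝ} {N : Ω → ℕ × ℕ}
    (hN : IsTrinomial t x y N) {f : ℕ × ℕ → Ω → ℝ} (hf : ∀ p, Integrable (f p) ℙ)
    (hfN : ∀ p, IndepFun N (f p) ℙ) :
    ∫ ω, f (N ω) ω = ∑ p ∈ triangle t, trinomialWeight t x y p * ∫ ω, f p ω := by
  rw [integral_comp_eq_sum_of_indepFun hN.1 hN.ae_mem_triangle hf hfN]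
  refine sum_congr rfl fun p hp => ?_
  rw [measureReal_def, hN.2 p, if_pos (mem_triangle.1 hp)]

theorem IsTrinomial.variance_compound {Ω : Type*} [MeasureSpace Ω]
    [IsProbabilityMeasure (ℙ : Measure Ω)] {t : ℕ} {x y : ℝ} {N : Ω → ℕ × ℕ}
    (hN : IsTrinomial t x y N) {A C : ℕ → Ω → ℝ} (hAid : ∀ i, IdentDistrib (A i) (A 0) ℙ ℙ)
    (hCid : ∀ i, IdentDistrib (C i) (C 0) ℙ ℙ) (hA : MemLp (A 0) 2 ℙ) (hC : MemLp (C 0) 2 ℙ)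
    (hpair : Pairwise fun k l => IndepFun (Sum.elim A C k) (Sum.elim A C l) ℙ)
    (hNindep : ∀ s : Finset (ℕ ⊕ ℕ), IndepFun N (fun ω => ∑ k ∈ s, Sum.elim A C k ω) ℙ) :
    variance (fun ω => ∑ i ∈ range (N ω).2, A i ω + ∑ i ∈ range (N ω).1, C i ω) ℙ =
      t * (y * (∫ ω, A 0 ω ^ 2) + x * (∫ ω, C 0 ω ^ 2) -
        (y * (∫ ω, A 0 ω) + x * (∫ ω, C 0 ω)) ^ 2) := by
  set g : ℕ × ℕ → Ω → ℝ := fun p ω => ∑ i ∈ range p.2, A i ω + ∑ i ∈ range p.1, C i ω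
  have hg (p : ℕ × ℕ) : MemLp (g p) 2 ℙ := memLp_sum_range_add_sum_range hAid hCid hA hC _ _
  have hgN (p : ℕ × ℕ) : IndepFun N (g p) ℙ := by
    simpa [sum_disjSum] using hNindep ((range p.2).disjSum (range p.1))
  have hS : ∫ ω, g (N ω) ω = t * (y * (∫ ω, A 0 ω) + x * (∫ ω, C 0 ω)) := by
    rw [hN.integral_comp_eq_sum (fun p => (hg p).integrable one_le_two) hgN]
    simp_rw [g, integral_sum_range_add_sum_range hAid hCid (hA.integrable one_le_two)
      (hC.integrable one_le_two)]
    calc _ = ∑ p ∈ triangle t, ((∫ ω, C 0 ω) * p.1 + (∫ ω, A 0 ω) * p.2) *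
          trinomialWeight t x y p := sum_congr rfl fun p _ => by ring
      _ = _ := by rw [sum_linear_mul_trinomialWeight]; ring
  have hS2 : ∫ ω, g (N ω) ω ^ 2 = t * (y * variance (A 0) ℙ + x * variance (C 0) ℙ) +
      (t * (t - 1) * (y * (∫ ω, A 0 ω) + x * (∫ ω, C 0 ω)) ^ 2 +
        t * (y * (∫ ω, A 0 ω) ^ 2 + x * (∫ ω, C 0 ω) ^ 2)) := by
    rw [hN.integral_comp_eq_sum (f := fun p ω => g p ω ^ 2) (fun p => (hg p).integrable_sq)
      fun p => (hgN p).comp measurable_id (measurable_id.pow_const 2)]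
    simp_rw [g, integral_sq_sum_range_add_sum_range hAid hCid hA hC hpair]
    calc _ = ∑ p ∈ triangle t, (variance (C 0) ℙ * p.1 + variance (A 0) ℙ * p.2) *
          trinomialWeight t x y p + ∑ p ∈ triangle t, ((∫ ω, C 0 ω) * p.1 +
            (∫ ω, A 0 ω) * p.2) ^ 2 * trinomialWeight t x y p := by
          rw [← sum_add_distrib]
          exact sum_congr rfl fun p _ => by ring
      _ = _ := by
          rw [sum_linear_mul_trinomialWeight, sum_linear_sq_mul_trinomialWeight]
          ring
  rw [variance_eq_sub (memLp_comp_of_ae_mem hN.1 hN.ae_mem_triangle hg)]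
  change (∫ ω, g (N ω) ω ^ 2) - (∫ ω, g (N ω) ω) ^ 2 = _
  rw [hS, hS2, variance_eq_sub hA, variance_eq_sub hC]
  simp only [Pi.pow_apply]
  ring

namespace ProbabilityTheory

variable {Ω ι κ β γ : Type*} {mΩ : MeasurableSpace Ω} {μ : Measure Ω} [mβ : MeasurableSpace β]
  [MeasurableSpace γ] {F : ι → Ω → β}

lemma iIndepFun.pairwise_indepFun_and_indepFun_finset_sum (h : iIndepFun F μ)
    (hF : ∀ i, Measurable (F i)) (i₀ : ι) (φ : β → γ) (hφ : Measurable φ) (e : κ → ι)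
    (he : Function.Injective e) (he₀ : ∀ k, e k ≠ i₀) (π : κ → β → ℝ)
    (hπ : ∀ k, Measurable (π k)) {N : Ω → γ} {X : κ → Ω → ℝ} (hN : N = fun ω => φ (F i₀ ω))
    (hX : ∀ k, X k = fun ω => π k (F (e k) ω)) :
    (Pairwise fun k l => IndepFun (X k) (X l) μ) ∧
      ∀ s : Finset κ, IndepFun N (fun ω => ∑ k ∈ s, X k ω) μ := by
  refine ⟨fun k l hkl => ?_, fun s => ?_⟩
  · change IndepFun (X k) (X l) μ
    rw [hX k, hX l]
    exact (h.indepFun (he.ne hkl)).comp (hπ k) (hπ l)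
  have hsplit := indep_iSup_of_disjoint (fun i => (hF i).comap_le) h.iIndep
    (disjoint_compl_right (a := ({i₀} : Set ι)))
  rw [_root_.iSup_singleton] at hsplit
  rw [IndepFun_iff_Indep]
  refine indep_of_indep_of_le_left (indep_of_indep_of_le_right hsplit ?_) ?_
  · refine Measurable.comap_le (Finset.measurable_sum s fun k _ => ?_)
    rw [hX k]
    exact (hπ k).comp <| (comap_measurable (F (e k))).mono
      (le_iSup₂ (f := fun i (_ : i ∈ ({i₀}ᶜ : Set ι)) => mβ.comap (F i)) (e k) (he₀ k)) le_rfl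
  · rw [hN]
    exact (hφ.comp (comap_measurable (F i₀))).comap_le

end ProbabilityTheory

def modelFamily {Ω : Type*} (B0 B1 B2 : Ω → ℕ) (Y1 Y2 Y3 Y4 : ℕ → Ω → ℝ)
    (i : Option (ℕ ⊕ ℕ ⊕ ℕ)) : Ω → ℝ × ℝ × ℝ :=
  i.elim (fun ω => ((B0 ω : ℝ), (B1 ω : ℝ), (B2 ω : ℝ))) <|
    Sum.elim (fun i ω => (Y1 i ω, 0, 0)) <|
      Sum.elim (fun i ω => (Y2 i ω, 0, 0)) fun i ω => (Y3 i ω, Y4 i ω, 0)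

lemma measurable_modelFamily {Ω : Type*} [MeasureSpace Ω] {t : ℕ} {p0 p1 p2 : ℝ}
    {B0 B1 B2 : Ω → ℕ} (hmult : IsMultinomial t p0 p1 p2 B0 B1 B2) {Y1 Y2 Y3 Y4 : ℕ → Ω → ℝ}
    (hmeas : ∀ i, Measurable (Y1 i) ∧ Measurable (Y2 i) ∧ Measurable (Y3 i) ∧ Measurable (Y4 i))
    (i : Option (ℕ ⊕ ℕ ⊕ ℕ)) : Measurable (modelFamily B0 B1 B2 Y1 Y2 Y3 Y4 i) := by
  obtain ⟨hB0, hB1, hB2, -⟩ := hmult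
  rcases i with _ | i | i | i <;>
    simp only [modelFamily, Option.elim_none, Option.elim_some, Sum.elim_inl, Sum.elim_inr]
  · fun_prop
  all_goals obtain ⟨h1, h2, h3, h4⟩ := hmeas i; fun_prop

theorem variance_of_compound_multinomial
    {Ω : Type*} [MeasureSpace Ω] [IsProbabilityMeasure (ℙ : Measure Ω)]
    (t : ℕ) (p0 p1 p2 : ℝ)
    (B0 B1 B2 : Ω → ℕ) (hmult : IsMultinomial t p0 p1 p2 B0 B1 B2)
    (Y1 Y2 Y3 Y4 : ℕ → Ω → ℝ)
    (hmeas : ∀ i, Measurable (Y1 i) ∧ Measurable (Y2 i) ∧ Measurable (Y3 i) ∧ Measurable (Y4 i))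
    (hid1 : ∀ i, IdentDistrib (Y1 i) (Y1 0) ℙ ℙ)
    (hid2 : ∀ i, IdentDistrib (Y2 i) (Y2 0) ℙ ℙ)
    (hid34 : ∀ i, IdentDistrib (fun ω => (Y3 i ω, Y4 i ω)) (fun ω => (Y3 0 ω, Y4 0 ω)) ℙ ℙ)
    (hindep : iIndepFun
      (fun i : Option (ℕ ⊕ ℕ ⊕ ℕ) => (match i with
        | none => fun ω => ((B0 ω : ℝ), (B1 ω : ℝ), (B2 ω : ℝ))
        | some (.inl i) => fun ω => (Y1 i ω, 0, 0)
        | some (.inr (.inl i)) => fun ω => (Y2 i ω, 0, 0)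
        | some (.inr (.inr i)) => fun ω => (Y3 i ω, Y4 i ω, 0) : Ω → ℝ × ℝ × ℝ)) ℙ)
    (hint1 : Integrable (fun ω => Y1 0 ω ^ 2) ℙ) (hint2 : Integrable (fun ω => Y2 0 ω ^ 2) ℙ)
    (hint3 : Integrable (fun ω => Y3 0 ω ^ 2) ℙ) (hint4 : Integrable (fun ω => Y4 0 ω ^ 2) ℙ) :
    variance (fun ω => ∑ i ∈ Finset.range (B1 ω), Y1 i ω +
        ∑ i ∈ Finset.range (B0 ω), Y3 i ω) ℙ =
      t * (p1 * (∫ ω, Y1 0 ω ^ 2 ∂ℙ) + p0 * (∫ ω, Y3 0 ω ^ 2 ∂ℙ) -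
        (p1 * (∫ ω, Y1 0 ω ∂ℙ) + p0 * (∫ ω, Y3 0 ω ∂ℙ)) ^ 2) ∧
    variance (fun ω => ∑ i ∈ Finset.range (B2 ω), Y2 i ω +
        ∑ i ∈ Finset.range (B0 ω), Y4 i ω) ℙ =
      t * (p2 * (∫ ω, Y2 0 ω ^ 2 ∂ℙ) + p0 * (∫ ω, Y4 0 ω ^ 2 ∂ℙ) -
        (p2 * (∫ ω, Y2 0 ω ∂ℙ) + p0 * (∫ ω, Y4 0 ω ∂ℙ)) ^ 2) := by
  have hF : iIndepFun (modelFamily B0 B1 B2 Y1 Y2 Y3 Y4) ℙ := by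
    convert hindep with i
    rcases i with _ | i | i | i <;> rfl
  have hFm := measurable_modelFamily hmult hmeas
  have hL2 {Y : Ω → ℝ} (hY : Measurable Y) (hY2 : Integrable (fun ω => Y ω ^ 2) ℙ) :
      MemLp Y 2 ℙ := (memLp_two_iff_integrable_sq hY.aestronglyMeasurable).2 hY2
  obtain ⟨hpair₁, hsum₁⟩ := hF.pairwise_indepFun_and_indepFun_finset_sum hFm none
    (fun v => (⌊v.1⌋₊, ⌊v.2.1⌋₊)) (by fun_prop)
    (Sum.elim (fun i => some (.inl i)) fun i => some (.inr (.inr i)))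
    (by rintro (i | i) (j | j) <;> simp) (by rintro (i | i) <;> simp) (fun _ => Prod.fst)
    (fun _ => measurable_fst) (N := fun ω => (B0 ω, B1 ω))
    (X := Sum.elim Y1 Y3) (by funext ω; simp [modelFamily])
    (by rintro (i | i) <;> rfl)
  obtain ⟨hpair₂, hsum₂⟩ := hF.pairwise_indepFun_and_indepFun_finset_sum hFm none
    (fun v => (⌊v.1⌋₊, ⌊v.2.2⌋₊)) (by fun_prop)
    (Sum.elim (fun i => some (.inr (.inl i))) fun i => some (.inr (.inr i)))
    (by rintro (i | i) (j | j) <;> simp) (by rintro (i | i) <;> simp)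
    (Sum.elim (fun _ => Prod.fst) fun _ v => v.2.1) (by rintro (i | i) <;> simp <;> fun_prop)
    (N := fun ω => (B0 ω, B2 ω))
    (X := Sum.elim Y2 Y4) (by funext ω; simp [modelFamily]) (by rintro (i | i) <;> rfl)
  exact ⟨hmult.isTrinomial.variance_compound hid1 (fun i => (hid34 i).comp measurable_fst)
      (hL2 (hmeas 0).1 hint1) (hL2 (hmeas 0).2.2.1 hint3) hpair₁ hsum₁,
    hmult.swap.isTrinomial.variance_compound hid2 (fun i => (hid34 i).comp measurable_snd)
      (hL2 (hmeas 0).2.1 hint2) (hL2 (hmeas 0).2.2.2 hint4) hpair₂ hsum₂⟩
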